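/- arXiv:2504.12693 — 5 statements merged into one kernel-verified Lean document; each statement's English description precedes it below -/
import Mathlib

section
/- Let d be an even positive integer and 0 ≤ k ≤ d. Then the coefficient of z^{d/2} in (1 − z)^k (1 + z)^{d−k} equals (−1)^{k/2}·C(d, d/2)·C(d/2, k/2)/C(d, k) if k is even, and equals 0 if k is odd. Here C(n,m) denotes the binomial coefficient. -/
/-!
Both sides come from the generating function `(1 + y + z - y z) ^ d`. Expanded as
`((1 + z) + y (1 - z)) ^ d`, its coefficient of `y ^ k z ^ m` is
`C(d, k) [z ^ m] (1 - z) ^ k (1 + z) ^ (d - k)`; since it is symmetric in `y` and `z`, this equals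
`C(d, m) [z ^ k] (1 - z) ^ m (1 + z) ^ (d - m)`. For `d = 2 m` the latter polynomial is
`(1 - z ^ 2) ^ m`, whose coefficients are read off from the binomial theorem.
-/

open Polynomial Polynomial.Bivariate

namespace Polynomial

theorem Bivariate.coeff_coeff_swap {R : Type*} [CommSemiring R] (p : R[X][Y]) (i j : ℕ) :
    ((swap p).coeff i).coeff j = (p.coeff j).coeff i := by
  induction p using Polynomial.induction_on' with
  | add p q hp hq => simp only [map_add, coeff_add, hp, hq]
  | monomial n f =>
    induction f using Polynomial.induction_on' with
    | add f g hf hg => simp only [map_add, coeff_add, hf, hg]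
    | monomial m r =>
      simp only [swap_monomial_monomial, coeff_monomial]
      split_ifs <;> simp_all [coeff_monomial]

variable {R : Type*} [CommRing R]

theorem coeff_one_sub_X_pow (m j : ℕ) :
    ((1 - X : R[X]) ^ m).coeff j = (-1) ^ j * m.choose j := by
  rw [show (1 - X : R[X]) = C (-1) * X + 1 by simp; ring, add_pow, finsetSum_coeff]
  simp only [mul_pow, ← C_pow, one_pow, mul_one, coeff_mul_natCast, coeff_C_mul_X_pow]
  simp only [ite_mul, zero_mul, Finset.sum_ite_eq, Finset.mem_range]
  split_ifs
  · rfl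
  · rw [Nat.choose_eq_zero_of_lt (by omega), Nat.cast_zero, mul_zero]

theorem coeff_one_sub_X_pow_mul_one_add_X_pow_self (m k : ℕ) :
    ((1 - X : R[X]) ^ m * (1 + X) ^ m).coeff k =
      if Even k then (-1 : R) ^ (k / 2) * m.choose (k / 2) else 0 := by
  have hexpand : (1 - X : R[X]) ^ m * (1 + X) ^ m = expand R 2 ((1 - X) ^ m) := by
    rw [← mul_pow, map_pow, map_sub, map_one, expand_X]; ring
  rw [hexpand, coeff_expand two_pos]
  simp only [← even_iff_two_dvd]
  split_ifs <;> simp [coeff_one_sub_X_pow]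

theorem coeff_C_one_add_X_add_Y_mul_C_one_sub_X_pow (d k : ℕ) :
    ((C (1 + X) + Y * C (1 - X) : R[X][Y]) ^ d).coeff k =
      (d.choose k : R[X]) * ((1 - X) ^ k * (1 + X) ^ (d - k)) := by
  have hterm (i : ℕ) : (Y * C (1 - X)) ^ i * C (1 + X) ^ (d - i) * (d.choose i : R[X][Y]) =
      C ((d.choose i : R[X]) * ((1 - X) ^ i * (1 + X) ^ (d - i))) * Y ^ i := by
    simp only [mul_pow, C_mul, C_pow, map_natCast]; ring
  rw [add_comm, add_pow, finsetSum_coeff]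
  simp only [hterm, coeff_C_mul_X_pow, Finset.sum_ite_eq, Finset.mem_range]
  split_ifs
  · rfl
  · rw [Nat.choose_eq_zero_of_lt (by omega), Nat.cast_zero, zero_mul]

theorem choose_mul_coeff_one_sub_X_pow_mul_one_add_X_pow_comm (d k m : ℕ) :
    (d.choose k : R) * ((1 - X : R[X]) ^ k * (1 + X) ^ (d - k)).coeff m =
      d.choose m * ((1 - X : R[X]) ^ m * (1 + X) ^ (d - m)).coeff k := by
  have hswap : swap (C (1 + X) + Y * C (1 - X) : R[X][Y]) = C (1 + X) + Y * C (1 - X) := by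
    simp only [map_add, map_one, map_sub, swap_C, map_X, map_mul, swap_Y]
    ring
  have h := Bivariate.coeff_coeff_swap ((C (1 + X) + Y * C (1 - X) : R[X][Y]) ^ d) k m
  rw [map_pow, hswap, coeff_C_one_add_X_add_Y_mul_C_one_sub_X_pow,
    coeff_C_one_add_X_add_Y_mul_C_one_sub_X_pow, ← C_eq_natCast, ← C_eq_natCast, coeff_C_mul,
    coeff_C_mul] at h
  exact h

end Polynomial

theorem middle_coeff_one_sub_one_add_general (d k : ℕ) (hd : Even d) (hk : k ≤ d) :
    ((1 - Polynomial.X) ^ k * (1 + Polynomial.X) ^ (d - k) : Polynomial ℚ).coeff (d / 2) =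
    if Even k then
      (-1 : ℚ) ^ (k / 2) * (d.choose (d / 2) : ℚ) * ((d / 2).choose (k / 2) : ℚ) /
        (d.choose k : ℚ)
    else 0 := by
  obtain ⟨m, rfl⟩ := hd
  have hm : (m + m) / 2 = m := by omega
  have hchoose : ((m + m).choose k : ℚ) ≠ 0 := Nat.cast_ne_zero.mpr (Nat.choose_pos hk).ne'
  have h := choose_mul_coeff_one_sub_X_pow_mul_one_add_X_pow_comm (R := ℚ) (m + m) k m
  rw [Nat.add_sub_cancel, coeff_one_sub_X_pow_mul_one_add_X_pow_self] at h
  rw [hm]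
  split_ifs at h ⊢
  · rw [eq_div_iff hchoose]; linear_combination h
  · exact (mul_eq_zero.mp (h.trans (mul_zero _))).resolve_left hchoose

/-- The middle coefficient of `(1-z)^k (1+z)^{d-k}` for even `d`:
it is `(-1)^{k/2} C(d,d/2) C(d/2,k/2) / C(d,k)` when `k` is even, and `0` when `k` is odd. -/
theorem middle_coeff_one_sub_one_add (d k : ℕ) (hd : Even d) (hd0 : 0 < d) (hk : k ≤ d) :
    ((1 - Polynomial.X) ^ k * (1 + Polynomial.X) ^ (d - k) : Polynomial ℚ).coeff (d / 2) =
    if Even k then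
      (-1 : ℚ) ^ (k / 2) * (d.choose (d / 2) : ℚ) * ((d / 2).choose (k / 2) : ℚ) /
        (d.choose k : ℚ)
    else 0 :=
  middle_coeff_one_sub_one_add_general d k hd hk
end

section
/- Let G = (V, E) be a finite graph and for each vertex v let P_v ⊆ ℤ. Then N(G; ∏_{v∈V} P_v) = ∑_{F ⊆ E} ((−1)^{|F|}/2^{|E|}) · ∏_{v∈V} C((1−z)^{d_F(v)} (1+z)^{d_v − d_F(v)}; P_v), where d_v is the degree of v in G and d_F(v) is the degree of v in the subgraph (V, F), and C(q; P) is the sum of coefficients of z^ℓ in q over ℓ ∈ P. -/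
/-!
Orientations are read off a generating function: `∏_{uw ∈ E} (x_u + x_w)` is the sum, over all
orientations, of `∏_v x_v ^ outdeg(v)`, so `N(G; ∏ P_v)` is the sum of its coefficients at the
exponent vectors in `∏ P_v`. Writing each factor as
`x_u + x_w = ((1 + x_u)(1 + x_w) - (1 - x_u)(1 - x_w)) / 2` and expanding over the set `F` of edges
that take the second term turns the product into
`2^{-|E|} ∑_F (-1)^{|F|} ∏_v (1 - x_v)^{d_F(v)} (1 + x_v)^{d_v - d_F(v)}`. Each summand is a product
of polynomials in separate variables, on which the coefficient sum over `∏ P_v` factors as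
`∏_v C(·; P_v)`.
-/

open scoped Classical in
/-- `C(q ; P)`: the sum of coefficients of `z^ℓ` in `q` over `ℓ ∈ P`. -/
noncomputable def coeffSum (q : Polynomial ℚ) (P : Set ℤ) : ℚ :=
  ∑ n ∈ q.support, if ((n : ℕ) : ℤ) ∈ P then q.coeff n else 0

/-- Degree of the vertex `v` in the edge subset `F`. -/
def subDegree {V : Type*} [DecidableEq V] (F : Finset (Sym2 V)) (v : V) : ℕ :=
  (F.filter fun e => v ∈ e).card

open Finset MvPolynomial

section WeightedCoeffSum

variable {σ R : Type*} [Fintype σ] [CommSemiring R]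

/-- `p ↦ ∑_m (∏_v χ v (m v)) • coeff m p`; with `χ v` the indicator of `P_v`, this is the
multivariate `C(p; ∏ P_v)`. -/
noncomputable def weightedCoeffSum (χ : σ → ℕ → R) : MvPolynomial σ R →ₗ[R] R :=
  Finsupp.linearCombination R (fun m : σ →₀ ℕ => ∏ v, χ v (m v)) ∘ₗ
    (AddMonoidAlgebra.coeffLinearEquiv R).toLinearMap

theorem weightedCoeffSum_monomial (χ : σ → ℕ → R) (m : σ →₀ ℕ) (c : R) :
    weightedCoeffSum χ (monomial m c) = c * ∏ v, χ v (m v) := by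
  rw [← single_eq_monomial]
  simp [weightedCoeffSum, AddMonoidAlgebra.coeff_single]

theorem weightedCoeffSum_prod_X_pow (χ : σ → ℕ → R) (k : σ → ℕ) :
    weightedCoeffSum χ (∏ v, X v ^ k v) = ∏ v, χ v (k v) := by
  classical
  rw [prod_X_pow, weightedCoeffSum_monomial, one_mul]
  simp

theorem weightedCoeffSum_prod_aeval (χ : σ → ℕ → R) (q : σ → Polynomial R) :
    weightedCoeffSum χ (∏ v, Polynomial.aeval (X v) (q v)) =
      ∏ v, ∑ n ∈ (q v).support, χ v n * (q v).coeff n := by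
  classical
  have hq : ∀ v, Polynomial.aeval (X v) (q v) =
      ∑ n ∈ (q v).support, (q v).coeff n • (X v : MvPolynomial σ R) ^ n := by
    intro v
    conv_lhs => rw [(q v).as_sum_support_C_mul_X_pow]
    simp [Polynomial.aeval_C, Algebra.smul_def]
  rw [prod_congr rfl fun v _ => hq v, prod_univ_sum, prod_univ_sum, map_sum]
  refine sum_congr rfl fun k _ => ?_
  rw [prod_smul, map_smul, weightedCoeffSum_prod_X_pow, smul_eq_mul, ← prod_mul_distrib]
  exact prod_congr rfl fun _ _ => mul_comm _ _

end WeightedCoeffSum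

section Graphs

variable {V R : Type*} [DecidableEq V]

theorem prod_sum_X_eq_sum_orientations [Fintype V] [CommSemiring R] (E : Finset (Sym2 V)) :
    ∏ e : E, ∑ v ∈ (e : Sym2 V).toFinset, (X v : MvPolynomial V R) =
      ∑ f : E → V, if ∀ e : E, f e ∈ (e : Sym2 V) then ∏ v, X v ^ #{e | f e = v} else 0 := by
  have hends : ∀ e : Sym2 V, ∑ v ∈ e.toFinset, (X v : MvPolynomial V R) =
      ∑ v, if v ∈ e then X v else 0 := fun e => by
    rw [← sum_filter]; congr 1; ext; simp
  simp only [hends, Fintype.prod_sum]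
  refine sum_congr rfl fun f _ => ?_
  rw [prod_ite_zero, ← prod_fiberwise' univ f]
  simp

theorem natCard_orientations_eq_sum [Fintype V] [CommSemiring R] (E : Finset (Sym2 V))
    (p : V → ℕ → Prop) [∀ v n, Decidable (p v n)] :
    (Nat.card {f : E → V // (∀ e : E, f e ∈ (e : Sym2 V)) ∧ ∀ v, p v #{e | f e = v}} : R) =
      ∑ f : E → V, if ∀ e : E, f e ∈ (e : Sym2 V) then
        ∏ v, (if p v #{e | f e = v} then 1 else 0) else 0 := by
  rw [Nat.card_eq_fintype_card, Fintype.card_subtype, card_filter, Nat.cast_sum]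
  refine sum_congr rfl fun f _ => ?_
  rw [Fintype.prod_boole, ite_and]
  split_ifs <;> simp

theorem two_smul_sum_X_eq [CommRing R] {e : Sym2 V} (he : ¬e.IsDiag) :
    (2 : R) • ∑ v ∈ e.toFinset, (X v : MvPolynomial V R) =
      ∏ v ∈ e.toFinset, (1 + X v) - ∏ v ∈ e.toFinset, (1 - X v) := by
  induction e with
  | h a b =>
    have hab : a ≠ b := by simpa using he
    rw [Sym2.toFinset_mk_eq, sum_pair hab, prod_pair hab, prod_pair hab, two_smul]
    ring

theorem prod_prod_toFinset_eq_prod_pow_subDegree [Fintype V] {M : Type*} [CommMonoid M]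
    (F : Finset (Sym2 V)) (g : V → M) :
    ∏ e ∈ F, ∏ v ∈ e.toFinset, g v = ∏ v, g v ^ subDegree F v := by
  rw [prod_comm' (t' := univ) (s' := fun v => F.filter (v ∈ ·)) (by simp)]
  simp [subDegree]

theorem subDegree_edgeFinset [Fintype V] (G : SimpleGraph V) [DecidableRel G.Adj] (v : V) :
    subDegree G.edgeFinset v = G.degree v := by
  rw [subDegree, ← G.incidenceFinset_eq_filter, G.card_incidenceFinset_eq_degree]

theorem subDegree_sdiff {E F : Finset (Sym2 V)} (hF : F ⊆ E) (v : V) :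
    subDegree (E \ F) v = subDegree E v - subDegree F v := by
  have : {e ∈ E \ F | v ∈ e} = {e ∈ E | v ∈ e} \ {e ∈ F | v ∈ e} := by
    ext; simp only [mem_filter, mem_sdiff]; tauto
  rw [subDegree, this, card_sdiff_of_subset (filter_subset_filter _ hF), subDegree, subDegree]

theorem two_pow_smul_prod_sum_X_eq [Fintype V] [CommRing R] (G : SimpleGraph V)
    [DecidableRel G.Adj] :
    (2 : R) ^ #G.edgeFinset • ∏ e ∈ G.edgeFinset, ∑ v ∈ e.toFinset, (X v : MvPolynomial V R) =
      ∑ F ∈ G.edgeFinset.powerset, (-1 : R) ^ #F •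
        ∏ v, Polynomial.aeval (X v) ((1 - Polynomial.X : Polynomial R) ^ subDegree F v *
          (1 + Polynomial.X) ^ (G.degree v - subDegree F v)) := by
  have hedge : ∀ e ∈ G.edgeFinset, (2 : R) • ∑ v ∈ e.toFinset, (X v : MvPolynomial V R) =
      (-1 : R) • ∏ v ∈ e.toFinset, (1 - X v) + ∏ v ∈ e.toFinset, (1 + X v) := fun e he => by
    rw [two_smul_sum_X_eq (G.not_isDiag_of_mem_edgeFinset he), neg_one_smul]
    ring
  rw [smul_prod, prod_congr rfl hedge, prod_add]
  refine sum_congr rfl fun F hF => ?_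
  rw [← smul_prod, smul_mul_assoc, prod_prod_toFinset_eq_prod_pow_subDegree,
    prod_prod_toFinset_eq_prod_pow_subDegree, ← prod_mul_distrib]
  simp [subDegree_sdiff (mem_powerset.mp hF), subDegree_edgeFinset]

end Graphs

open scoped Classical in
theorem coeffSum_eq_sum_indicator_mul (q : Polynomial ℚ) (P : Set ℤ) :
    coeffSum q P = ∑ n ∈ q.support, (if ((n : ℕ) : ℤ) ∈ P then 1 else 0) * q.coeff n := by
  simp only [coeffSum, ite_mul, one_mul, zero_mul]

/-- Duality theorem: the number of orientations of `G` with out-degree of each `v` in `P v`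
equals `∑_{F ⊆ E} (-1)^{|F|}/2^{|E|} ∏_v C((1-z)^{d_F(v)} (1+z)^{d_v - d_F(v)} ; P_v)`. -/
theorem duality
    {V : Type*} [Fintype V] [DecidableEq V] (G : SimpleGraph V) [DecidableRel G.Adj]
    (P : V → Set ℤ) :
    (Nat.card {f : G.edgeFinset → V //
        (∀ e : G.edgeFinset, (f e : V) ∈ (e : Sym2 V)) ∧
        ∀ v : V, (((Finset.univ.filter fun e => f e = v).card : ℕ) : ℤ) ∈ P v} : ℚ) =
    ∑ F ∈ G.edgeFinset.powerset,
      ((-1 : ℚ) ^ F.card / 2 ^ G.edgeFinset.card) *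
        ∏ v : V,
          coeffSum
            ((1 - Polynomial.X) ^ subDegree F v *
              (1 + Polynomial.X) ^ (G.degree v - subDegree F v)) (P v) := by
  classical
  have hexpand := congrArg (weightedCoeffSum fun v n => if ((n : ℕ) : ℤ) ∈ P v then (1 : ℚ) else 0)
    (two_pow_smul_prod_sum_X_eq (R := ℚ) G)
  rw [map_smul, ← prod_coe_sort, prod_sum_X_eq_sum_orientations, map_sum, map_sum] at hexpand
  simp only [map_smul, apply_ite, map_zero, weightedCoeffSum_prod_X_pow,
    weightedCoeffSum_prod_aeval, ← coeffSum_eq_sum_indicator_mul, smul_eq_mul] at hexpand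
  rw [natCard_orientations_eq_sum G.edgeFinset fun v n => ((n : ℕ) : ℤ) ∈ P v]
  simp_rw [div_mul_eq_mul_div, ← sum_div]
  rw [eq_div_iff (by positivity), mul_comm, hexpand]
end

section
/- Let G = (V, E) be a finite connected graph. The number of orientations of G in which every vertex has even out-degree equals 2^{|E| − |V|}·(1 + (−1)^{|E|}). In particular, such orientations exist if and only if |E| is even (when E is nonempty). -/
open Finset

private lemma walk_boundary {V : Type*} [DecidableEq V] {G : SimpleGraph V} {S : Finset V}
    {a b : V} (w : G.Walk a b) : a ∈ S → b ∉ S → ∃ u v, G.Adj u v ∧ u ∈ S ∧ v ∉ S := by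
  induction w with
  | nil => intro ha hb; exact absurd ha hb
  | @cons x y z h p ih =>
    intro ha hb
    by_cases hc : y ∈ S
    · exact ih hc hb
    · exact ⟨x, y, h, ha, hc⟩

private lemma edge_sum {V : Type*} [Fintype V] [DecidableEq V] {u v : V} (huv : u ≠ v)
    (c : V → ℚ) :
    (∑ x : V, (if x ∈ s(u,v) then (1:ℚ) else 0) * c x) = c u + c v := by
  have h : ∀ x : V, (if x ∈ s(u,v) then (1:ℚ) else 0) * c x
      = if x ∈ ({u, v} : Finset V) then c x else 0 := by
    intro x
    by_cases hx : x ∈ s(u,v)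
    · rw [if_pos hx, if_pos (by simpa [Sym2.mem_iff] using hx), one_mul]
    · rw [if_neg hx, if_neg (by simpa [Sym2.mem_iff] using hx), zero_mul]
  rw [Finset.sum_congr rfl fun x _ => h x, Finset.sum_ite_mem, Finset.univ_inter,
    Finset.sum_pair huv]

/-- The number of even orientations (every out-degree even) of a finite connected graph
equals `2^{|E| - |V|} (1 + (-1)^{|E|})`. -/
theorem card_even_orientations
    {V : Type*} [Fintype V] [DecidableEq V] (G : SimpleGraph V) [DecidableRel G.Adj]
    (hG : G.Connected) :
    (Nat.card {f : G.edgeFinset → V //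
        (∀ e : G.edgeFinset, (f e : V) ∈ (e : Sym2 V)) ∧
        ∀ v : V, Even (Finset.univ.filter fun e => f e = v).card} : ℚ) =
    2 ^ ((G.edgeFinset.card : ℤ) - (Fintype.card V : ℤ)) *
      (1 + (-1 : ℚ) ^ G.edgeFinset.card) := by
  classical
  have hV : Nonempty V := hG.nonempty
  set m := G.edgeFinset.card with hm
  set n := Fintype.card V with hn
  set P : (G.edgeFinset → V) → Prop := fun f =>
      (∀ e : G.edgeFinset, (f e : V) ∈ (e : Sym2 V)) ∧
        ∀ v : V, Even (Finset.univ.filter fun e => f e = v).card with hP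
  have hA : (Nat.card {f : G.edgeFinset → V // P f}) = (Finset.univ.filter P).card := by
    rw [Nat.card_eq_fintype_card]
    exact Fintype.card_subtype _
  set N : ℚ := ((Finset.univ.filter P).card : ℚ) with hN
  set d : (G.edgeFinset → V) → V → ℕ :=
    fun f v => (Finset.univ.filter fun e => f e = v).card with hd
  -- the per-edge factor
  have hTval : ∀ (u v : V) (huv : G.Adj u v) (he : s(u,v) ∈ G.edgeFinset) (S : Finset V),
      (∑ x : V, (if x ∈ ((⟨s(u,v), he⟩ : G.edgeFinset) : Sym2 V) then (1:ℚ) else 0) *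
        (if x ∈ S then (-1:ℚ) else 1))
      = (if u ∈ S then (-1:ℚ) else 1) + (if v ∈ S then (-1:ℚ) else 1) := by
    intro u v huv he S
    exact edge_sum huv.ne (fun x => if x ∈ S then (-1:ℚ) else 1)
  have hcard : Fintype.card G.edgeFinset = m := Fintype.card_coe _
  have key : (2:ℚ)^n * N = 2^m + (-2:ℚ)^m := by
    have h1 : N = ∑ f : G.edgeFinset → V, if P f then (1:ℚ) else 0 := by
      rw [Finset.sum_boole]
    have h2 : ∀ f : G.edgeFinset → V, (if P f then (1:ℚ) else 0) =
        (∏ e : G.edgeFinset, if (f e : V) ∈ (e : Sym2 V) then (1:ℚ) else 0) *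
        (∏ v : V, if Even (d f v) then (1:ℚ) else 0) := by
      intro f
      rw [Finset.prod_boole, Finset.prod_boole]
      by_cases hx : ∀ e : G.edgeFinset, (f e : V) ∈ (e : Sym2 V)
      · by_cases hy : ∀ v : V, Even (d f v)
        · rw [if_pos (show P f from ⟨hx, hy⟩), if_pos (fun i _ => hx i),
            if_pos (fun i _ => hy i), one_mul]
        · rw [if_neg (fun h : P f => hy h.2),
            if_neg (show ¬∀ i ∈ Finset.univ, Even (d f i) from
              fun h => hy fun v => h v (Finset.mem_univ v)), mul_zero]
      · rw [if_neg (fun h : P f => hx h.1),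
          if_neg (show ¬∀ (i : G.edgeFinset), i ∈ Finset.univ → (f i : V) ∈ (↑i : Sym2 V) from
            fun h => hx fun e => h e (Finset.mem_univ e)), zero_mul]
    have hB : ∀ k : ℕ, (1 + (-1:ℚ)^k) = 2 * (if Even k then 1 else 0) := by
      intro k
      by_cases h : Even k
      · rw [if_pos h, h.neg_one_pow]; norm_num
      · rw [if_neg h, (Nat.not_even_iff_odd.mp h).neg_one_pow]; norm_num
    have hQ : ∀ (f : G.edgeFinset → V) (S : Finset V),
        (∏ v ∈ S, (-1:ℚ)^(d f v)) = ∏ e : G.edgeFinset, (if f e ∈ S then (-1:ℚ) else 1) := by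
      intro f S
      have h1' : ∀ v, (-1:ℚ)^(d f v) = ∏ e : G.edgeFinset, (if f e = v then (-1:ℚ) else 1) := by
        intro v
        rw [Finset.prod_ite, Finset.prod_const, Finset.prod_const, one_pow, mul_one, hd]
      rw [Finset.prod_congr rfl fun v _ => h1' v, Finset.prod_comm]
      exact Finset.prod_congr rfl fun e _ => Finset.prod_ite_eq S (f e) (fun _ => (-1:ℚ))
    calc (2:ℚ)^n * N
        = ∑ f : G.edgeFinset → V,
            (∏ e : G.edgeFinset, if (f e : V) ∈ (e : Sym2 V) then (1:ℚ) else 0) *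
            (∏ v : V, (1 + (-1:ℚ)^(d f v))) := by
          rw [h1, Finset.mul_sum]
          refine Finset.sum_congr rfl fun f _ => ?_
          rw [h2 f]
          have hB' : (∏ v : V, (1 + (-1:ℚ)^(d f v))) =
              (2:ℚ)^n * ∏ v : V, if Even (d f v) then (1:ℚ) else 0 := by
            rw [Finset.prod_congr rfl fun v _ => hB (d f v), Finset.prod_mul_distrib,
              Finset.prod_const, Finset.card_univ, hn]
          rw [hB']; ring
      _ = ∑ f : G.edgeFinset → V, ∑ S ∈ (Finset.univ : Finset V).powerset,
            ∏ e : G.edgeFinset, ((if (f e : V) ∈ (e : Sym2 V) then (1:ℚ) else 0) *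
              (if f e ∈ S then (-1:ℚ) else 1)) := by
          refine Finset.sum_congr rfl fun f _ => ?_
          rw [Finset.prod_congr rfl fun v (_ : v ∈ Finset.univ) =>
              add_comm (1:ℚ) ((-1:ℚ)^(d f v)), Finset.prod_add, Finset.mul_sum]
          refine Finset.sum_congr rfl fun S hS => ?_
          rw [Finset.prod_const_one, mul_one, hQ f S, ← Finset.prod_mul_distrib]
      _ = ∑ S ∈ (Finset.univ : Finset V).powerset, ∏ e : G.edgeFinset,
            ∑ x : V, ((if x ∈ (e : Sym2 V) then (1:ℚ) else 0) *
              (if x ∈ S then (-1:ℚ) else 1)) := by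
          rw [Finset.sum_comm]
          refine Finset.sum_congr rfl fun S _ => ?_
          rw [Finset.prod_univ_sum (fun _ : G.edgeFinset => (Finset.univ : Finset V))
            (fun (e : G.edgeFinset) (x : V) =>
              (if x ∈ (e : Sym2 V) then (1:ℚ) else 0) * (if x ∈ S then (-1:ℚ) else 1)),
            Fintype.piFinset_univ]
      _ = ∑ S ∈ (Finset.univ : Finset V).powerset,
            ((if S = (∅ : Finset V) then (2:ℚ)^m else 0) +
             (if S = (Finset.univ : Finset V) then (-2:ℚ)^m else 0)) := by
          refine Finset.sum_congr rfl fun S _ => ?_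
          by_cases hS0 : S = ∅
          · subst hS0
            rw [if_pos rfl, if_neg (Ne.symm (Finset.univ_nonempty.ne_empty)), add_zero]
            have : ∀ e : G.edgeFinset, (∑ x : V, (if x ∈ (e : Sym2 V) then (1:ℚ) else 0) *
                (if x ∈ (∅ : Finset V) then (-1:ℚ) else 1)) = 2 := by
              rintro ⟨e, he⟩
              induction e using Sym2.ind with
              | _ u v =>
                have hadj : G.Adj u v := by
                  rwa [SimpleGraph.mem_edgeFinset, SimpleGraph.mem_edgeSet] at he
                rw [hTval u v hadj he]
                norm_num
            rw [Finset.prod_congr rfl fun e _ => this e, Finset.prod_const, Finset.card_univ,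
              hcard]
          · by_cases hS1 : S = Finset.univ
            · subst hS1
              rw [if_neg hS0, if_pos rfl, zero_add]
              have : ∀ e : G.edgeFinset, (∑ x : V, (if x ∈ (e : Sym2 V) then (1:ℚ) else 0) *
                  (if x ∈ (Finset.univ : Finset V) then (-1:ℚ) else 1)) = -2 := by
                rintro ⟨e, he⟩
                induction e using Sym2.ind with
                | _ u v =>
                  have hadj : G.Adj u v := by
                    rwa [SimpleGraph.mem_edgeFinset, SimpleGraph.mem_edgeSet] at he
                  rw [hTval u v hadj he]
                  norm_num
              rw [Finset.prod_congr rfl fun e _ => this e, Finset.prod_const, Finset.card_univ,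
                hcard]
            · rw [if_neg hS0, if_neg hS1, add_zero]
              obtain ⟨a, ha⟩ := Finset.nonempty_iff_ne_empty.mpr hS0
              obtain ⟨b, hb⟩ : ∃ b, b ∉ S := by
                by_contra h
                push_neg at h
                exact hS1 (Finset.eq_univ_of_forall h)
              obtain ⟨w⟩ := hG.preconnected a b
              obtain ⟨u, v, hadj, hu, hv⟩ := walk_boundary w ha hb
              have he : s(u,v) ∈ G.edgeFinset := by
                rw [SimpleGraph.mem_edgeFinset, SimpleGraph.mem_edgeSet]; exact hadj
              refine Finset.prod_eq_zero (Finset.mem_univ (⟨s(u,v), he⟩ : G.edgeFinset)) ?_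
              rw [hTval u v hadj he, if_pos hu, if_neg hv]
              ring
      _ = 2^m + (-2:ℚ)^m := by
          rw [Finset.sum_add_distrib, Finset.sum_ite_eq' _ (∅ : Finset V),
            Finset.sum_ite_eq' _ (Finset.univ : Finset V),
            if_pos (Finset.mem_powerset.mpr (Finset.empty_subset _)),
            if_pos (Finset.mem_powerset.mpr (le_refl _))]
  -- conclude
  have h2n : (2:ℚ)^n ≠ 0 := by positivity
  rw [hA]
  rw [← hN]
  rw [show ((2:ℚ) ^ ((m : ℤ) - (n : ℤ))) = 2^m / 2^n by
    rw [zpow_sub₀ (two_ne_zero), zpow_natCast, zpow_natCast]]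
  rw [div_mul_eq_mul_div, eq_div_iff h2n]
  have : (-2:ℚ)^m = (-1:ℚ)^m * 2^m := by rw [← neg_one_mul, mul_pow]
  rw [this] at key
  linarith [key]
end

section
/- Let G = (V, E) be a finite connected graph with |E| even. Then the number of even orientations of G equals 2^{|E| − |V| + 1}, and in particular at least one even orientation exists. -/
/-!
Fix a reference orientation `o`. Reversing the edges of a set `x ⊆ E` changes the vector of
out-degree parities by `B x`, where `B : 𝔽₂^E → 𝔽₂^V` is the incidence map, so the even
orientations correspond to the solutions of `B x = p(o)`, with `p(o)` the parity vector of `o`.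
For connected `G` the range of `B` is the hyperplane of vectors with coordinate sum `0`, and
`p(o)` lies in it because its coordinates sum to `|E|`. The solutions therefore form a coset of
`ker B`, which has dimension `|E| - (|V| - 1)`.
-/

open Finset

theorem LinearMap.natCard_fiber_eq_natCard_ker {R M N : Type*} [Ring R] [AddCommGroup M]
    [AddCommGroup N] [Module R M] [Module R N] (f : M →ₗ[R] N) (x₀ : M) :
    Nat.card {x // f x = f x₀} = Nat.card (LinearMap.ker f) :=
  Nat.card_congr (f.toAddMonoidHom.fiberEquivKer x₀)

theorem Sym2.ite_eq_add_ite_eq_of_mem {V : Type*} [DecidableEq V] {z : Sym2 V} (hz : ¬z.IsDiag)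
    {u w : V} (hu : u ∈ z) (hw : w ∈ z) (v : V) :
    ((if u = v then 1 else 0 : ZMod 2) + if w = v then 1 else 0) =
      if u = w then 0 else if v ∈ z then 1 else 0 := by
  induction z using Sym2.ind with
  | _ a b =>
    simp only [mk_isDiag_iff, mem_iff] at hz hu hw ⊢
    split_ifs <;> grind

namespace SimpleGraph

section OutDegreeParity

variable {V E : Type*} [DecidableEq V] [Fintype E]

def outDegreeParity (f : E → V) (v : V) : ZMod 2 := #{e | f e = v}

theorem outDegreeParity_eq_zero_iff (f : E → V) :
    outDegreeParity f = 0 ↔ ∀ v, Even #{e | f e = v} := by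
  simp only [funext_iff, outDegreeParity, Pi.zero_apply, ZMod.natCast_eq_zero_iff_even]

theorem sum_outDegreeParity [Fintype V] (f : E → V) :
    ∑ v, outDegreeParity f v = Fintype.card E := by
  rw [← card_univ, card_eq_sum_card_fiberwise (f := f) (t := univ) fun _ _ => mem_univ _]
  simp [outDegreeParity]

end OutDegreeParity

variable {V : Type*} [DecidableEq V] {G : SimpleGraph V} [DecidableRel G.Adj]

theorem incMatrix_apply_of_mem_edgeSet {R : Type*} [Zero R] [One R] {e : Sym2 V}
    (he : e ∈ G.edgeSet) (v : V) : G.incMatrix R v e = if v ∈ e then 1 else 0 := by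
  simp [incMatrix_apply', incidenceSet, he]

variable [Fintype V]

variable (G) in
noncomputable def edgeIncidence : (G.edgeFinset → ZMod 2) →ₗ[ZMod 2] V → ZMod 2 :=
  ((G.incMatrix (ZMod 2)).submatrix id (↑)).mulVecLin

theorem edgeIncidence_apply (x : G.edgeFinset → ZMod 2) (v : V) :
    G.edgeIncidence x v = ∑ e : G.edgeFinset, G.incMatrix (ZMod 2) v e * x e :=
  rfl

theorem edgeIncidence_single (e : G.edgeFinset) :
    G.edgeIncidence (Pi.single e 1) = fun v => if v ∈ (e : Sym2 V) then 1 else 0 := by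
  ext v
  rw [edgeIncidence, Matrix.mulVecLin_apply, Matrix.mulVec_single_one]
  exact incMatrix_apply_of_mem_edgeSet (mem_edgeFinset.mp e.2) v

theorem sum_edgeIncidence_apply (x : G.edgeFinset → ZMod 2) : ∑ v, G.edgeIncidence x v = 0 := by
  simp only [edgeIncidence_apply]
  rw [sum_comm]
  refine sum_eq_zero fun e _ => ?_
  rw [← sum_mul, G.sum_incMatrix_apply_of_mem_edgeSet (mem_edgeFinset.mp e.2)]
  simp only [CharTwo.two_eq_zero, zero_mul]

theorem single_sub_single_mem_range_edgeIncidence {u w : V} (h : G.Reachable u w) :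
    Pi.single u 1 - Pi.single w 1 ∈ LinearMap.range G.edgeIncidence := by
  obtain ⟨p⟩ := h
  induction p with
  | nil => rw [sub_self]; exact zero_mem _
  | @cons u c w hadj p ih =>
    have hcol : Pi.single u 1 - Pi.single c 1 =
        G.edgeIncidence (Pi.single ⟨s(u, c), mem_edgeFinset.mpr hadj⟩ 1) := by
      ext v
      rw [edgeIncidence_single]
      by_cases hu : v = u
      · subst hu; simp [hadj.ne]
      by_cases hc : v = c
      · subst hc; simp [hadj.ne', ZMod.neg_eq_self_mod_two]
      simp [hu, hc]
    rw [← sub_add_sub_cancel _ (Pi.single c 1), hcol]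
    exact add_mem (LinearMap.mem_range_self _ _) ih

theorem range_edgeIncidence (hG : G.Connected) :
    LinearMap.range G.edgeIncidence =
      LinearMap.ker (Fintype.linearCombination (ZMod 2) (1 : V → ZMod 2)) := by
  refine le_antisymm ?_ fun y hy => ?_
  · rintro _ ⟨x, rfl⟩
    simpa [Fintype.linearCombination_apply] using sum_edgeIncidence_apply x
  obtain ⟨v₀⟩ := hG.nonempty
  have hy : ∑ u, y u = 0 := by simpa [Fintype.linearCombination_apply] using hy
  have hdecomp : y = ∑ u, y u • (Pi.single u 1 - Pi.single v₀ 1) := by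
    simp only [smul_sub, sum_sub_distrib, ← sum_smul, hy, zero_smul, sub_zero]
    ext v
    simp [Pi.single_apply]
  rw [hdecomp]
  exact sum_mem fun u _ => Submodule.smul_mem _ _
    (single_sub_single_mem_range_edgeIncidence (hG.preconnected u v₀))

theorem finrank_ker_edgeIncidence_add_card (hG : G.Connected) :
    Module.finrank (ZMod 2) (LinearMap.ker G.edgeIncidence) + Fintype.card V =
      #G.edgeFinset + 1 := by
  obtain ⟨v₀⟩ := hG.nonempty
  have hsum : Fintype.linearCombination (ZMod 2) (1 : V → ZMod 2) ≠ 0 := fun h => by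
    simpa [Fintype.linearCombination_apply] using LinearMap.congr_fun h (Pi.single v₀ 1)
  have hcorank := Module.Dual.finrank_ker_add_one_of_ne_zero hsum
  have hrank := LinearMap.finrank_range_add_finrank_ker G.edgeIncidence
  rw [range_edgeIncidence hG] at hrank
  simp only [Module.finrank_fintype_fun_eq_card, Fintype.card_coe] at hcorank hrank
  omega

theorem outDegreeParity_add_outDegreeParity {f g : G.edgeFinset → V}
    (hf : ∀ e : G.edgeFinset, f e ∈ (e : Sym2 V))
    (hg : ∀ e : G.edgeFinset, g e ∈ (e : Sym2 V)) :
    outDegreeParity f + outDegreeParity g =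
      G.edgeIncidence fun e => if f e = g e then 0 else 1 := by
  ext v
  simp only [Pi.add_apply, outDegreeParity, edgeIncidence_apply, card_filter, Nat.cast_sum,
    Nat.cast_ite, Nat.cast_one, Nat.cast_zero, ← sum_add_distrib]
  refine sum_congr rfl fun e _ => ?_
  have hdiag := G.not_isDiag_of_mem_edgeSet (mem_edgeFinset.mp e.2)
  rw [Sym2.ite_eq_add_ite_eq_of_mem hdiag (hf e) (hg e),
    incMatrix_apply_of_mem_edgeSet (mem_edgeFinset.mp e.2)]
  split_ifs <;> simp

noncomputable def reversalEquiv {o : G.edgeFinset → V}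
    (ho : ∀ e : G.edgeFinset, o e ∈ (e : Sym2 V)) :
    {f : G.edgeFinset → V // ∀ e : G.edgeFinset, f e ∈ (e : Sym2 V)} ≃
      (G.edgeFinset → ZMod 2) where
  toFun f e := if f.1 e = o e then 0 else 1
  invFun x := ⟨fun e => if x e = 0 then o e else Sym2.Mem.other' (ho e), fun e => by
    dsimp only
    split_ifs
    exacts [ho e, Sym2.other_mem' (ho e)]⟩
  left_inv f := by
    ext e
    have hf := f.2 e
    rw [← Sym2.other_spec' (ho e), Sym2.mem_iff] at hf
    by_cases h : f.1 e = o e <;> simp_all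
  right_inv x := by
    ext e
    have hne := Sym2.other_eq_other' (ho e) ▸
      Sym2.other_ne (G.not_isDiag_of_mem_edgeSet (mem_edgeFinset.mp e.2)) (ho e)
    by_cases h : x e = 0
    · simp [h]
    · simp only [h, if_false, hne]
      exact (Fin.eq_one_of_ne_zero _ h).symm

noncomputable def evenOrientationsEquiv {o : G.edgeFinset → V}
    (ho : ∀ e : G.edgeFinset, o e ∈ (e : Sym2 V)) :
    {f : G.edgeFinset → V //
        (∀ e : G.edgeFinset, f e ∈ (e : Sym2 V)) ∧ ∀ v, Even #{e | f e = v}} ≃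
      {x // G.edgeIncidence x = outDegreeParity o} :=
  (Equiv.subtypeSubtypeEquivSubtypeInter _ _).symm.trans <|
    (reversalEquiv ho).subtypeEquiv fun f => by
      rw [← outDegreeParity_eq_zero_iff, ← add_eq_right (b := outDegreeParity o),
        outDegreeParity_add_outDegreeParity f.2 ho]
      rfl

end SimpleGraph

/-- A finite connected graph with an even number of edges has exactly `2^{|E| - |V| + 1}`
even orientations; in particular an even orientation exists. -/
theorem card_even_orientations_of_even
    {V : Type*} [Fintype V] [DecidableEq V] (G : SimpleGraph V) [DecidableRel G.Adj]
    (hG : G.Connected) (hE : Even G.edgeFinset.card) :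
    (Nat.card {f : G.edgeFinset → V //
        (∀ e : G.edgeFinset, (f e : V) ∈ (e : Sym2 V)) ∧
        ∀ v : V, Even (Finset.univ.filter fun e => f e = v).card} : ℚ) =
      2 ^ ((G.edgeFinset.card : ℤ) - (Fintype.card V : ℤ) + 1) ∧
    Nonempty {f : G.edgeFinset → V //
        (∀ e : G.edgeFinset, (f e : V) ∈ (e : Sym2 V)) ∧
        ∀ v : V, Even (Finset.univ.filter fun e => f e = v).card} := by
  obtain ⟨o, ho⟩ : ∃ o : G.edgeFinset → V, ∀ e : G.edgeFinset, o e ∈ (e : Sym2 V) :=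
    ⟨fun e => (e : Sym2 V).out.1, fun e => Sym2.out_fst_mem _⟩
  obtain ⟨x₀, hx₀⟩ : SimpleGraph.outDegreeParity o ∈ LinearMap.range G.edgeIncidence := by
    rw [SimpleGraph.range_edgeIncidence hG, LinearMap.mem_ker, Fintype.linearCombination_apply]
    simp only [Pi.one_apply, smul_eq_mul, mul_one, SimpleGraph.sum_outDegreeParity,
      Fintype.card_coe]
    exact hE.natCast_zmod_two
  refine ⟨?_, ⟨(SimpleGraph.evenOrientationsEquiv ho).symm ⟨x₀, hx₀⟩⟩⟩
  have hdim := SimpleGraph.finrank_ker_edgeIncidence_add_card hG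
  zify at hdim
  rw [Nat.card_congr (SimpleGraph.evenOrientationsEquiv ho), ← hx₀,
    LinearMap.natCard_fiber_eq_natCard_ker, Module.natCard_eq_pow_finrank (K := ZMod 2),
    Nat.card_zmod, Nat.cast_pow, ← zpow_natCast]
  congr 1
  linarith
end

section
/- Let d be an even positive integer. Define s_k = C(d, d/2)·C(d/2, k/2) / (2^{d/2}·C(d, k)) for even k with 0 ≤ k ≤ d, and s_k = 0 for odd k. Then for any d-regular finite graph G = (V, E), the number of Eulerian orientations of G equals ∑_{A ⊆ E} ∏_{v∈V} s_{d_A(v)}, where d_A(v) is the degree of v in the subgraph (V, A). -/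
open Polynomial Finset

namespace BCaux

lemma coeff_aux (m k : ℕ) (hk : k ≤ 2*m) :
    ((((X:ℚ[X]) - 1) * (X + 1))^m).coeff (2*m - k) =
      if Even k then (-1)^(k/2) * (m.choose (k/2) : ℚ) else 0 := by
  have h1 : ((X:ℚ[X]) - 1) * (X + 1) = X^2 + Polynomial.C (-1) := by
    simp [Polynomial.C_neg]; ring
  rw [h1, add_pow]
  rw [finset_sum_coeff]
  have hterm : ∀ i ∈ range (m+1),
      ((((X:ℚ[X])^2)^i * (Polynomial.C (-1:ℚ))^(m-i) * (m.choose i : ℚ[X]))).coeff (2*m-k)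
      = if 2*m - k = 2*i then ((-1:ℚ)^(m-i) * (m.choose i : ℚ)) else 0 := by
    intro i _
    have : (((X:ℚ[X])^2)^i * (Polynomial.C (-1:ℚ))^(m-i) * (m.choose i : ℚ[X]))
        = Polynomial.C ((-1:ℚ)^(m-i) * (m.choose i : ℚ)) * X^(2*i) := by
      rw [← pow_mul, ← Polynomial.C_pow]
      push_cast
      rw [Polynomial.C_mul, Polynomial.C_eq_natCast]
      ring
    rw [this, Polynomial.coeff_C_mul, Polynomial.coeff_X_pow]
    by_cases h : 2*m - k = 2*i <;> simp [h]
  rw [Finset.sum_congr rfl hterm]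
  by_cases hke : Even k
  · obtain ⟨l, hl⟩ := hke
    have hkl : k = 2*l := by omega
    subst hkl
    have hlm : l ≤ m := by omega
    rw [Finset.sum_eq_single (m - l)]
    · have : 2*m - 2*l = 2*(m-l) := by omega
      rw [if_pos this]
      have h2 : m - (m - l) = l := by omega
      rw [h2, Nat.choose_symm hlm, if_pos (even_two_mul l), Nat.mul_div_cancel_left l two_pos]
    · intro i _ hi
      have : ¬ (2*m - 2*l = 2*i) := by omega
      rw [if_neg this]
    · intro h
      exact absurd (Finset.mem_range.mpr (by omega)) h
  · have : ∀ i ∈ range (m+1), (if 2*m - k = 2*i then ((-1:ℚ)^(m-i) * (m.choose i : ℚ)) else 0) = 0 := by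
      intro i _
      have hodd : ¬ (2*m - k = 2*i) := by
        rcases Nat.even_or_odd k with h | h
        · exact absurd h hke
        · obtain ⟨r, hr⟩ := h
          omega
      rw [if_neg hodd]
    rw [Finset.sum_congr rfl this, Finset.sum_const_zero, if_neg hke]


lemma prod_shape {ι : Type*} [DecidableEq ι] (u S : Finset ι) (hS : S ⊆ u) :
    (∏ e ∈ u, ((X:ℚ[X]) + Polynomial.C (if e ∈ S then (-1:ℚ) else 1)))
      = ((X:ℚ[X]) - 1)^S.card * ((X:ℚ[X]) + 1)^(u.card - S.card) := by
  rw [← Finset.prod_sdiff hS]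
  have h1 : ∏ e ∈ S, ((X:ℚ[X]) + Polynomial.C (if e ∈ S then (-1:ℚ) else 1)) = (X - 1)^S.card := by
    rw [Finset.prod_congr rfl (fun e he => by rw [if_pos he]), Finset.prod_const]
    rw [Polynomial.C_neg, Polynomial.C_1]
    ring_nf
  have h2 : ∏ e ∈ u \ S, ((X:ℚ[X]) + Polynomial.C (if e ∈ S then (-1:ℚ) else 1)) = (X + 1)^(u.card - S.card) := by
    rw [Finset.prod_congr rfl (fun e he => by rw [if_neg (Finset.mem_sdiff.mp he).2]), Finset.prod_const,
      Finset.card_sdiff_of_subset hS]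
    norm_num
  rw [h1, h2]
  ring

lemma coeffG {ι : Type*} [DecidableEq ι] (u S : Finset ι) (hS : S ⊆ u) (j : ℕ) (hj : j ≤ u.card) :
    (((X:ℚ[X]) - 1)^S.card * ((X:ℚ[X]) + 1)^(u.card - S.card)).coeff j
      = ∑ T ∈ u.powersetCard (u.card - j), (-1:ℚ)^((S ∩ T).card) := by
  rw [← prod_shape u S hS, Finset.prod_X_add_C_coeff u _ hj]
  refine Finset.sum_congr rfl (fun T _ => ?_)
  rw [← Finset.prod_filter_mul_prod_filter_not T (· ∈ S)]
  have h1 : ∏ e ∈ T.filter (· ∈ S), (if e ∈ S then (-1:ℚ) else 1) = (-1:ℚ)^((S ∩ T).card) := by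
    rw [Finset.prod_congr rfl (fun e he => by rw [if_pos (Finset.mem_filter.mp he).2]),
      Finset.prod_const, Finset.filter_mem_eq_inter, Finset.inter_comm]
  have h2 : ∏ e ∈ T.filter (¬ · ∈ S), (if e ∈ S then (-1:ℚ) else 1) = 1 := by
    rw [Finset.prod_congr rfl (fun e he => by rw [if_neg (Finset.mem_filter.mp he).2]), Finset.prod_const,
      one_pow]
  rw [h1, h2, mul_one]

lemma identN0 (m k : ℕ) (hk : k ≤ 2*m) :
    ((2*m).choose k : ℚ) * ((((X:ℚ[X]) - 1)^k * ((X:ℚ[X]) + 1)^(2*m - k)).coeff m)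
      = ((2*m).choose m : ℚ) * (if Even k then (-1)^(k/2) * (m.choose (k/2):ℚ) else 0) := by
  have hu : (Finset.range (2*m)).card = 2*m := Finset.card_range _
  set u := Finset.range (2*m) with hudef
  have key1 : ∀ S ∈ u.powersetCard k,
      (((X:ℚ[X]) - 1)^k * ((X:ℚ[X]) + 1)^(2*m - k)).coeff m
        = ∑ T ∈ u.powersetCard m, (-1:ℚ)^((S ∩ T).card) := by
    intro S hS
    obtain ⟨hSsub, hScard⟩ := Finset.mem_powersetCard.mp hS
    have := coeffG u S hSsub m (by omega)
    rw [hScard, hu] at this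
    rw [this]
    have : 2*m - m = m := by omega
    rw [this]
  have key2 : ∀ T ∈ u.powersetCard m,
      (∑ S ∈ u.powersetCard k, (-1:ℚ)^((T ∩ S).card))
        = (((X:ℚ[X]) - 1)^m * ((X:ℚ[X]) + 1)^m).coeff (2*m - k) := by
    intro T hT
    obtain ⟨hTsub, hTcard⟩ := Finset.mem_powersetCard.mp hT
    have := coeffG u T hTsub (2*m - k) (by omega)
    rw [hTcard, hu] at this
    have h2 : 2*m - (2*m - k) = k := by omega
    have h3 : 2*m - m = m := by omega
    rw [h2, h3] at this
    rw [this]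
  have hcnt : ((2*m).choose k : ℚ) * ((((X:ℚ[X]) - 1)^k * ((X:ℚ[X]) + 1)^(2*m - k)).coeff m)
      = ∑ S ∈ u.powersetCard k, ∑ T ∈ u.powersetCard m, (-1:ℚ)^((S ∩ T).card) := by
    rw [← Finset.sum_congr rfl key1, Finset.sum_const, Finset.card_powersetCard, hu,
      nsmul_eq_mul]
  rw [hcnt, Finset.sum_comm]
  have : ∀ T ∈ u.powersetCard m, (∑ S ∈ u.powersetCard k, (-1:ℚ)^((S ∩ T).card))
      = (((X:ℚ[X]) - 1)^m * ((X:ℚ[X]) + 1)^m).coeff (2*m - k) := by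
    intro T hT
    rw [← key2 T hT]
    exact Finset.sum_congr rfl (fun S _ => by rw [Finset.inter_comm])
  rw [Finset.sum_congr rfl this, Finset.sum_const, Finset.card_powersetCard, hu, nsmul_eq_mul]
  rw [← mul_pow]
  rw [coeff_aux m k hk]


lemma prod_sign {ι : Type*} [DecidableEq ι] (S T : Finset ι) :
    ∏ e ∈ S, (if e ∈ T then (-1:ℚ) else 1) = (-1:ℚ)^((S ∩ T).card) := by
  rw [← Finset.prod_filter_mul_prod_filter_not S (· ∈ T)]
  have h1 : ∏ e ∈ S.filter (· ∈ T), (if e ∈ T then (-1:ℚ) else 1) = (-1:ℚ)^((S ∩ T).card) := by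
    rw [Finset.prod_congr rfl (fun e he => by rw [if_pos (Finset.mem_filter.mp he).2]),
      Finset.prod_const, Finset.filter_mem_eq_inter]
  have h2 : ∏ e ∈ S.filter (¬ · ∈ T), (if e ∈ T then (-1:ℚ) else 1) = 1 := by
    rw [Finset.prod_congr rfl (fun e he => by rw [if_neg (Finset.mem_filter.mp he).2]),
      Finset.prod_const, one_pow]
  rw [h1, h2, mul_one]

lemma sum_powerset_prod {ι : Type*} [DecidableEq ι] (u : Finset ι) (g : ι → ℚ) :
    ∑ S ∈ u.powerset, ∏ e ∈ S, g e = ∏ e ∈ u, (g e + 1) := by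
  rw [Finset.prod_add]
  exact Finset.sum_congr rfl (fun t _ => by simp)

lemma claimA {ι : Type*} [DecidableEq ι] (m : ℕ) (u : Finset ι) (hu : u.card = 2*m)
    (ε : ι → ℚ) (hε : ∀ e ∈ u, ε e = 1 ∨ ε e = -1) :
    ∑ S ∈ u.powerset, (∑ T ∈ u.powersetCard m, (-1:ℚ)^((S ∩ T).card)) * ∏ e ∈ S, ε e
      = if (u.filter (fun e => ε e = -1)).card = m then (2:ℚ)^(2*m) else 0 := by
  set N := u.filter (fun e => ε e = -1) with hN
  have hNsub : N ⊆ u := Finset.filter_subset _ _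
  have step1 : ∀ S ∈ u.powerset,
      (∑ T ∈ u.powersetCard m, (-1:ℚ)^((S ∩ T).card)) * ∏ e ∈ S, ε e
      = ∑ T ∈ u.powersetCard m, ∏ e ∈ S, ((if e ∈ T then (-1:ℚ) else 1) * ε e) := by
    intro S _
    rw [Finset.sum_mul]
    refine Finset.sum_congr rfl (fun T _ => ?_)
    rw [Finset.prod_mul_distrib, prod_sign S T]
  rw [Finset.sum_congr rfl step1, Finset.sum_comm]
  have step2 : ∀ T ∈ u.powersetCard m,
      (∑ S ∈ u.powerset, ∏ e ∈ S, ((if e ∈ T then (-1:ℚ) else 1) * ε e))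
      = if T = N then (2:ℚ)^(2*m) else 0 := by
    intro T hT
    obtain ⟨hTsub, hTcard⟩ := Finset.mem_powersetCard.mp hT
    rw [sum_powerset_prod]
    by_cases hTN : T = N
    · have : ∀ e ∈ u, ((if e ∈ T then (-1:ℚ) else 1) * ε e + 1) = 2 := by
        intro e he
        by_cases heT : e ∈ T
        · have heN : e ∈ N := hTN ▸ heT
          have : ε e = -1 := (Finset.mem_filter.mp heN).2
          rw [if_pos heT, this]; norm_num
        · have heN : e ∉ N := fun h => heT (hTN ▸ h)
          have : ε e = 1 := by
            rcases hε e he with h | h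
            · exact h
            · exact absurd (Finset.mem_filter.mpr ⟨he, h⟩) heN
          rw [if_neg heT, this]; norm_num
      rw [Finset.prod_congr rfl this, Finset.prod_const, hu, if_pos hTN]
    · rw [if_neg hTN]
      have : ∃ e ∈ u, ¬((e ∈ T) ↔ (e ∈ N)) := by
        by_contra h
        push_neg at h
        exact hTN (Finset.ext fun e => by
          constructor
          · intro he; exact ((h e (hTsub he)).mp he)
          · intro he; exact ((h e (hNsub he)).mpr he))
      obtain ⟨e₀, he₀u, he₀⟩ := this
      refine Finset.prod_eq_zero he₀u ?_
      by_cases heT : e₀ ∈ T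
      · have heN : e₀ ∉ N := fun h => he₀ (iff_of_true heT h)
        have : ε e₀ = 1 := by
          rcases hε e₀ he₀u with h | h
          · exact h
          · exact absurd (Finset.mem_filter.mpr ⟨he₀u, h⟩) heN
        rw [if_pos heT, this]; norm_num
      · have heN : e₀ ∈ N := by
          by_contra h
          exact he₀ (iff_of_false heT h)
        have : ε e₀ = -1 := (Finset.mem_filter.mp heN).2
        rw [if_neg heT, this]; norm_num
  rw [Finset.sum_congr rfl step2, Finset.sum_ite_eq' (u.powersetCard m) N (fun _ => (2:ℚ)^(2*m))]
  by_cases h : N.card = m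
  · rw [if_pos (Finset.mem_powersetCard.mpr ⟨hNsub, h⟩), if_pos h]
  · rw [if_neg (fun hh => h (Finset.mem_powersetCard.mp hh).2), if_neg h]


noncomputable def gg (m k : ℕ) : ℚ :=
  (((X:ℚ[X]) - 1)^k * ((X:ℚ[X]) + 1)^(2*m - k)).coeff m

noncomputable def ss (m k : ℕ) : ℚ :=
  if Even k then ((2*m).choose m : ℚ) * ((m.choose (k/2) : ℚ)) / (2^m * ((2*m).choose k : ℚ)) else 0

lemma identN (m k : ℕ) (hk : k ≤ 2*m) :
    ((2*m).choose k : ℚ) * gg m k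
      = ((2*m).choose m : ℚ) * (if Even k then (-1)^(k/2) * (m.choose (k/2):ℚ) else 0) := by
  rw [gg]
  exact identN0 m k hk

lemma choose_ne (m k : ℕ) (hk : k ≤ 2*m) : (((2*m).choose k : ℚ)) ≠ 0 := by
  exact_mod_cast (Nat.choose_pos hk).ne'

lemma godd (m k : ℕ) (hk : k ≤ 2*m) (h : ¬ Even k) : gg m k = 0 := by
  have h1 := identN m k hk
  rw [if_neg h, mul_zero] at h1
  exact (mul_eq_zero.mp h1).resolve_left (choose_ne m k hk)

lemma ss_mul (m k : ℕ) (hk : k ≤ 2*m) :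
    ss m k * 2^(2*m) = (-1)^(k/2) * 2^m * gg m k := by
  by_cases h : Even k
  · have h1 := identN m k hk
    rw [if_pos h] at h1
    have h2 : gg m k = ((2*m).choose m : ℚ) * ((-1)^(k/2) * (m.choose (k/2):ℚ)) / ((2*m).choose k : ℚ) := by
      rw [eq_div_iff (choose_ne m k hk)]
      linarith [h1]
    rw [ss, if_pos h, h2]
    have hc := choose_ne m k hk
    have h2m : (2:ℚ)^(2*m) = 2^m * 2^m := by rw [two_mul, pow_add]
    field_simp
    ring_nf
    have hsq : ((-1:ℚ))^(k/2*2) = 1 := by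
      rw [pow_mul', neg_one_sq, one_pow]
    rw [hsq, mul_one]
  · rw [ss, if_neg h, godd m k hk h, zero_mul, mul_zero]


variable {V : Type*} [Fintype V] [DecidableEq V] (G : SimpleGraph V) [DecidableRel G.Adj]

def ends (e : G.edgeFinset) : Finset V := Finset.univ.filter (· ∈ (e : Sym2 V))

def ED (v : V) : Finset G.edgeFinset := Finset.univ.filter (fun e => v ∈ (e : Sym2 V))

lemma two_endpoints (e : G.edgeFinset) : ∃ a b : V, a ≠ b ∧ (e : Sym2 V) = s(a, b) := by
  obtain ⟨⟨a, b⟩, h⟩ := Quot.exists_rep (e : Sym2 V)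
  have hab : (e : Sym2 V) = s(a, b) := h.symm
  have : G.Adj a b := by
    have := e.2
    rw [SimpleGraph.mem_edgeFinset, hab] at this
    exact this
  exact ⟨a, b, this.ne, hab⟩

lemma mem_ends (e : G.edgeFinset) (w : V) : w ∈ ends G e ↔ w ∈ (e : Sym2 V) := by
  simp [ends]

lemma ends_eq {e : G.edgeFinset} {a b : V} (h : (e : Sym2 V) = s(a, b)) :
    ends G e = {a, b} := by
  ext w
  simp [mem_ends, h, Sym2.mem_iff]

lemma mem_ED (v : V) (e : G.edgeFinset) : e ∈ ED G v ↔ v ∈ (e : Sym2 V) := by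
  simp [ED]

lemma card_ED (v : V) : (ED G v).card = G.degree v := by
  rw [← SimpleGraph.card_incidenceFinset_eq_degree]
  refine Finset.card_bij (fun e _ => (e : Sym2 V)) ?_ ?_ ?_
  · intro e he
    rw [SimpleGraph.mem_incidenceFinset]
    exact ⟨(SimpleGraph.mem_edgeFinset).mp e.2, (mem_ED G v e).mp he⟩
  · intro e₁ _ e₂ _ h
    exact Subtype.ext h
  · intro e he
    rw [SimpleGraph.mem_incidenceFinset] at he
    exact ⟨⟨e, (SimpleGraph.mem_edgeFinset).mpr he.1⟩, (mem_ED G v _).mpr he.2, rfl⟩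

lemma edge_eval (e : G.edgeFinset) (Q : Finset V) (hQ : Q ⊆ ends G e) :
    ∑ w ∈ ends G e, ∏ v ∈ Q, (if w = v then (-1:ℚ) else 1)
      = if Q = ends G e then -2 else if Q = ∅ then 2 else 0 := by
  obtain ⟨a, b, hab, he⟩ := two_endpoints G e
  rw [ends_eq G he] at hQ ⊢
  rw [Finset.sum_pair hab]
  by_cases haQ : a ∈ Q <;> by_cases hbQ : b ∈ Q
  · have hQe : Q = {a, b} := by
      apply Finset.Subset.antisymm hQ
      intro x hx
      rcases Finset.mem_insert.mp hx with h | h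
      · exact h ▸ haQ
      · exact (Finset.mem_singleton.mp h) ▸ hbQ
    rw [hQe, if_pos rfl]
    rw [Finset.prod_pair hab, Finset.prod_pair hab]
    rw [if_pos rfl, if_neg hab, if_neg (Ne.symm hab), if_pos rfl]
    norm_num
  · have hQe : Q = {a} := by
      apply Finset.Subset.antisymm
      · intro x hx
        rcases Finset.mem_insert.mp (hQ hx) with h | h
        · exact Finset.mem_singleton.mpr h
        · exact absurd ((Finset.mem_singleton.mp h) ▸ hx) hbQ
      · intro x hx
        exact (Finset.mem_singleton.mp hx) ▸ haQ
    have h1 : Q ≠ {a, b} := by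
      intro h
      exact hbQ (h ▸ (Finset.mem_insert_of_mem (Finset.mem_singleton_self b)))
    have h2 : Q ≠ ∅ := Finset.ne_empty_of_mem haQ
    rw [if_neg h1, if_neg h2, hQe]
    rw [Finset.prod_singleton, Finset.prod_singleton]
    rw [if_pos rfl, if_neg (Ne.symm hab)]
    norm_num
  · have hQe : Q = {b} := by
      apply Finset.Subset.antisymm
      · intro x hx
        rcases Finset.mem_insert.mp (hQ hx) with h | h
        · exact absurd (h ▸ hx) haQ
        · exact h
      · intro x hx
        exact (Finset.mem_singleton.mp hx) ▸ hbQ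
    have h1 : Q ≠ {a, b} := by
      intro h
      exact haQ (h ▸ (Finset.mem_insert_self a {b}))
    have h2 : Q ≠ ∅ := Finset.ne_empty_of_mem hbQ
    rw [if_neg h1, if_neg h2, hQe]
    rw [Finset.prod_singleton, Finset.prod_singleton]
    rw [if_pos rfl, if_neg hab]
    norm_num
  · have hQe : Q = ∅ := by
      rw [Finset.eq_empty_iff_forall_notMem]
      intro x hx
      rcases Finset.mem_insert.mp (hQ hx) with h | h
      · exact haQ (h ▸ hx)
      · exact hbQ ((Finset.mem_singleton.mp h) ▸ hx)
    have h1 : Q ≠ {a, b} := by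
      intro h
      exact haQ (h ▸ (Finset.mem_insert_self a {b}))
    rw [if_neg h1, hQe, if_pos rfl]
    rw [Finset.prod_empty]
    norm_num



lemma aux_expand (m : ℕ) (hreg : ∀ v : V, G.degree v = 2*m) :
    (∑ f ∈ Fintype.piFinset (fun e => ends G e), ∏ v : V,
        (if (Finset.univ.filter fun e => f e = v).card = m then (1:ℚ) else 0))
        * ((2:ℚ)^(2*m))^(Fintype.card V)
    = ∑ B ∈ (Finset.univ : Finset G.edgeFinset).powerset,
        (∏ v : V, gg m ((ED G v ∩ B).card)) * ((-1:ℚ)^B.card * 2^(G.edgeFinset.card)) := by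
  classical
  have hcard : ∀ v : V, (ED G v).card = 2*m := fun v => (card_ED G v).trans (hreg v)
  have step1 : ∀ f ∈ Fintype.piFinset (fun e => ends G e),
      (∏ v : V, (if (Finset.univ.filter fun e => f e = v).card = m then (1:ℚ) else 0))
        * ((2:ℚ)^(2*m))^(Fintype.card V)
      = ∏ v : V, ∑ S ∈ (ED G v).powerset,
          gg m S.card * ∏ e ∈ S, (if f e = v then (-1:ℚ) else 1) := by
    intro f hf
    have hf' : ∀ e : G.edgeFinset, f e ∈ (e : Sym2 V) := fun e =>
      (mem_ends G e (f e)).mp (Fintype.mem_piFinset.mp hf e)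
    rw [← Finset.card_univ, ← Finset.prod_const, ← Finset.prod_mul_distrib]
    refine Finset.prod_congr rfl (fun v _ => ?_)
    have hA := claimA m (ED G v) (hcard v) (fun e => if f e = v then (-1:ℚ) else 1)
      (fun e _ => by by_cases h : f e = v <;> simp [h])
    have hco : ∀ S ∈ (ED G v).powerset,
        (∑ T ∈ (ED G v).powersetCard m, (-1:ℚ)^((S ∩ T).card))
          * ∏ e ∈ S, (if f e = v then (-1:ℚ) else 1)
        = gg m S.card * ∏ e ∈ S, (if f e = v then (-1:ℚ) else 1) := by
      intro S hS
      have hsub := Finset.mem_powerset.mp hS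
      have hG := coeffG (ED G v) S hsub m (by rw [hcard v]; omega)
      rw [hcard v] at hG
      have h2 : 2*m - m = m := by omega
      rw [h2] at hG
      rw [gg, hG]
    rw [Finset.sum_congr rfl hco] at hA
    have hfil : ((ED G v).filter (fun e => (if f e = v then (-1:ℚ) else 1) = -1))
        = Finset.univ.filter (fun e => f e = v) := by
      ext e
      simp only [Finset.mem_filter, mem_ED, Finset.mem_univ, true_and, ED]
      constructor
      · rintro ⟨-, h⟩
        by_cases hh : f e = v
        · exact hh
        · rw [if_neg hh] at h; norm_num at h
      · intro h
        exact ⟨h ▸ hf' e, by rw [if_pos h]⟩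
    rw [hfil] at hA
    rw [hA]
    by_cases h : (Finset.univ.filter fun e => f e = v).card = m
    · rw [if_pos h, if_pos h, one_mul]
    · rw [if_neg h, if_neg h, zero_mul]
  rw [Finset.sum_mul, Finset.sum_congr rfl step1]
  have step2 : ∀ f : G.edgeFinset → V,
      (∏ v : V, ∑ S ∈ (ED G v).powerset,
          gg m S.card * ∏ e ∈ S, (if f e = v then (-1:ℚ) else 1))
      = ∑ Sf ∈ Fintype.piFinset (fun v => (ED G v).powerset),
          ∏ v : V, (gg m ((Sf v).card) * ∏ e ∈ Sf v, (if f e = v then (-1:ℚ) else 1)) :=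
    fun f => Finset.prod_univ_sum _ _
  rw [Finset.sum_congr rfl (fun f _ => step2 f), Finset.sum_comm]
  have step3 : ∀ Sf ∈ Fintype.piFinset (fun v => (ED G v).powerset),
      (∑ f ∈ Fintype.piFinset (fun e => ends G e),
        ∏ v : V, (gg m ((Sf v).card) * ∏ e ∈ Sf v, (if f e = v then (-1:ℚ) else 1)))
      = (∏ v : V, gg m ((Sf v).card)) *
          ∏ e : G.edgeFinset, (if (Finset.univ.filter fun v => e ∈ Sf v) = ends G e then (-2:ℚ)
            else if (Finset.univ.filter fun v => e ∈ Sf v) = ∅ then 2 else 0) := by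
    intro Sf hSf
    have hSf' : ∀ v, Sf v ⊆ ED G v := fun v =>
      Finset.mem_powerset.mp (Fintype.mem_piFinset.mp hSf v)
    have h1 : ∀ f : G.edgeFinset → V,
        (∏ v : V, (gg m ((Sf v).card) * ∏ e ∈ Sf v, (if f e = v then (-1:ℚ) else 1)))
        = (∏ v : V, gg m ((Sf v).card)) *
            ∏ e : G.edgeFinset, ∏ v ∈ Finset.univ.filter (fun v => e ∈ Sf v),
              (if f e = v then (-1:ℚ) else 1) := by
      intro f
      rw [Finset.prod_mul_distrib]
      congr 1
      exact Finset.prod_comm' (fun v e => by simp)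
    rw [Finset.sum_congr rfl (fun f _ => h1 f), ← Finset.mul_sum]
    congr 1
    have h2 := (Finset.prod_univ_sum (fun e => ends G e)
      (fun e w => ∏ v ∈ Finset.univ.filter (fun v => e ∈ Sf v), (if w = v then (-1:ℚ) else 1)))
    rw [← h2]
    refine Finset.prod_congr rfl (fun e _ => ?_)
    refine edge_eval G e _ (fun v hv => ?_)
    rw [mem_ends]
    exact (mem_ED G v e).mp (hSf' v (Finset.mem_filter.mp hv).2)
  rw [Finset.sum_congr rfl step3]
  -- now reindex over B
  have hzero : ∀ Sf ∈ Fintype.piFinset (fun v => (ED G v).powerset),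
      ((∏ v : V, gg m ((Sf v).card)) *
          ∏ e : G.edgeFinset, (if (Finset.univ.filter fun v => e ∈ Sf v) = ends G e then (-2:ℚ)
            else if (Finset.univ.filter fun v => e ∈ Sf v) = ∅ then 2 else 0)) ≠ 0 →
      (∀ (e : G.edgeFinset) (v w : V), v ∈ (e : Sym2 V) → w ∈ (e : Sym2 V)
        → (e ∈ Sf v ↔ e ∈ Sf w)) := by
    intro Sf hSf hne
    by_contra hbad
    push_neg at hbad
    obtain ⟨e, v, w, hv, hw, hiff⟩ := hbad
    apply hne
    have hzfac : (if (Finset.univ.filter fun v => e ∈ Sf v) = ends G e then (-2:ℚ)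
            else if (Finset.univ.filter fun v => e ∈ Sf v) = ∅ then 2 else 0) = 0 := by
      have key : ∃ a b : V, a ∈ (e : Sym2 V) ∧ b ∈ (e : Sym2 V) ∧ e ∈ Sf a ∧ e ∉ Sf b := by
        rcases hiff with ⟨h1, h2⟩ | ⟨h1, h2⟩
        · exact ⟨v, w, hv, hw, h1, h2⟩
        · exact ⟨w, v, hw, hv, h2, h1⟩
      obtain ⟨a, b, ha, hb, hSa, hSb⟩ := key
      have hne1 : (Finset.univ.filter fun v => e ∈ Sf v) ≠ ends G e := by
        intro h
        have : b ∈ Finset.univ.filter fun v => e ∈ Sf v := by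
          rw [h, mem_ends]; exact hb
        exact hSb (Finset.mem_filter.mp this).2
      have hne2 : (Finset.univ.filter fun v => e ∈ Sf v) ≠ ∅ := by
        apply Finset.ne_empty_of_mem (a := a)
        exact Finset.mem_filter.mpr ⟨Finset.mem_univ a, hSa⟩
      rw [if_neg hne1, if_neg hne2]
    rw [Finset.prod_eq_zero (Finset.mem_univ e) hzfac, mul_zero]
  rw [← Finset.sum_filter_of_ne hzero]
  refine (Finset.sum_nbij' (fun B => fun v => ED G v ∩ B)
    (fun Sf => Finset.univ.filter (fun e => ∀ u ∈ (e : Sym2 V), e ∈ Sf u))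
    ?_ ?_ ?_ ?_ ?_).symm
  · -- maps powerset into filter good piFinset
    intro B _
    rw [Finset.mem_filter]
    constructor
    · rw [Fintype.mem_piFinset]
      intro v
      exact Finset.mem_powerset.mpr Finset.inter_subset_left
    · intro e v w hv hw
      simp only [Finset.mem_inter, mem_ED]
      constructor
      · rintro ⟨-, h⟩; exact ⟨hw, h⟩
      · rintro ⟨-, h⟩; exact ⟨hv, h⟩
  · -- maps filter good into powerset
    intro Sf _
    exact Finset.mem_powerset.mpr (Finset.subset_univ _)
  · -- left inverse : j (i B) = B  (i.e. filter of (fun v => ED v ∩ B) = B)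
    intro B _
    ext e
    simp only [Finset.mem_filter, Finset.mem_univ, true_and, Finset.mem_inter, mem_ED]
    constructor
    · intro h
      obtain ⟨a, b, -, he⟩ := two_endpoints G e
      have ha : a ∈ (e : Sym2 V) := by rw [he]; exact Sym2.mem_mk_left a b
      exact (h a ha).2
    · intro h u hu
      exact ⟨hu, h⟩
  · -- right inverse : i (j Sf) = Sf for good Sf
    intro Sf hSf
    rw [Finset.mem_filter] at hSf
    obtain ⟨hSf1, hgood⟩ := hSf
    have hsub : ∀ v, Sf v ⊆ ED G v := fun v =>
      Finset.mem_powerset.mp (Fintype.mem_piFinset.mp hSf1 v)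
    funext v
    ext e
    simp only [Finset.mem_inter, mem_ED, Finset.mem_filter, Finset.mem_univ, true_and]
    constructor
    · rintro ⟨hv, h⟩
      exact h v hv
    · intro h
      have hv : v ∈ (e : Sym2 V) := (mem_ED G v e).mp (hsub v h)
      refine ⟨hv, fun u hu => ?_⟩
      exact (hgood e v u hv hu).mp h
  · -- value equality
    intro B _
    congr 1
    have hfac : ∀ e : G.edgeFinset,
        (if (Finset.univ.filter fun v => e ∈ ED G v ∩ B) = ends G e then (-2:ℚ)
          else if (Finset.univ.filter fun v => e ∈ ED G v ∩ B) = ∅ then 2 else 0)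
        = (if e ∈ B then (-2:ℚ) else 2) := by
      intro e
      obtain ⟨a, b, -, he⟩ := two_endpoints G e
      have ha : a ∈ (e : Sym2 V) := by rw [he]; exact Sym2.mem_mk_left a b
      by_cases hB : e ∈ B
      · have : (Finset.univ.filter fun v => e ∈ ED G v ∩ B) = ends G e := by
          ext v
          simp only [Finset.mem_filter, Finset.mem_univ, true_and, Finset.mem_inter,
            mem_ED, mem_ends]
          constructor
          · rintro ⟨h, -⟩; exact h
          · intro h; exact ⟨h, hB⟩
        rw [if_pos this, if_pos hB]
      · have h1 : (Finset.univ.filter fun v => e ∈ ED G v ∩ B) = ∅ := by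
          rw [Finset.eq_empty_iff_forall_notMem]
          intro v hv
          exact hB (Finset.mem_inter.mp (Finset.mem_filter.mp hv).2).2
        have h2 : (Finset.univ.filter fun v => e ∈ ED G v ∩ B) ≠ ends G e := by
          rw [h1]
          intro h
          have : a ∈ (∅ : Finset V) := by rw [h, mem_ends]; exact ha
          simp at this
        rw [if_neg h2, if_pos h1, if_neg hB]
    rw [Finset.prod_congr rfl (fun e _ => hfac e)]
    rw [Finset.prod_ite (fun _ => (-2:ℚ)) (fun _ => (2:ℚ))]
    rw [Finset.prod_const, Finset.prod_const, Finset.filter_univ_mem]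
    have hcd : (Finset.univ.filter fun e : G.edgeFinset => e ∉ B).card
        = G.edgeFinset.card - B.card := by
      rw [Finset.filter_not, Finset.filter_univ_mem, Finset.card_sdiff_of_subset (Finset.subset_univ B),
        Finset.card_univ, Fintype.card_coe]
    rw [hcd]
    have hble : B.card ≤ G.edgeFinset.card := by
      calc B.card ≤ (Finset.univ : Finset G.edgeFinset).card := Finset.card_le_card (Finset.subset_univ B)
      _ = G.edgeFinset.card := by rw [Finset.card_univ, Fintype.card_coe]
    have : ((-2:ℚ))^B.card = (-1)^B.card * 2^B.card := by
      rw [← neg_one_mul, mul_pow]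
    rw [this, mul_assoc, ← pow_add]
    congr 2
    omega



lemma card_ends (e : G.edgeFinset) : (ends G e).card = 2 := by
  obtain ⟨a, b, hab, he⟩ := two_endpoints G e
  rw [ends_eq G he, Finset.card_pair hab]

lemma inter_filter_eq (v : V) (B : Finset G.edgeFinset) :
    ED G v ∩ B = B.filter (fun e : G.edgeFinset => v ∈ (e : Sym2 V)) := by
  ext e
  simp only [Finset.mem_inter, mem_ED, Finset.mem_filter]
  tauto

lemma handshake (B : Finset G.edgeFinset) :
    ∑ v : V, (ED G v ∩ B).card = 2 * B.card := by
  have h1 : ∀ v : V, (ED G v ∩ B).card = ∑ e ∈ B, if v ∈ (e : Sym2 V) then 1 else 0 := by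
    intro v
    rw [inter_filter_eq, Finset.card_filter]
  rw [Finset.sum_congr rfl (fun v _ => h1 v), Finset.sum_comm]
  have h2 : ∀ e ∈ B, (∑ v : V, if v ∈ (e : Sym2 V) then 1 else 0) = 2 := by
    intro e _
    rw [Finset.sum_boole]
    have : (Finset.univ.filter fun v => v ∈ (e : Sym2 V)) = ends G e := rfl
    rw [this, card_ends]
    simp
  rw [Finset.sum_congr rfl h2, Finset.sum_const, smul_eq_mul, mul_comm]

lemma edge_count (m : ℕ) (hreg : ∀ v : V, G.degree v = 2*m) :
    G.edgeFinset.card = m * Fintype.card V := by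
  have h := G.sum_degrees_eq_twice_card_edges
  rw [Finset.sum_congr rfl (fun v _ => hreg v), Finset.sum_const, smul_eq_mul,
    Finset.card_univ] at h
  have h2 : 2 * (m * Fintype.card V) = 2 * G.edgeFinset.card := by rw [← h]; ring
  omega

lemma aux_match (m : ℕ) (hreg : ∀ v : V, G.degree v = 2*m) :
    ∑ B ∈ (Finset.univ : Finset G.edgeFinset).powerset,
        (∏ v : V, gg m ((ED G v ∩ B).card)) * ((-1:ℚ)^B.card * 2^(G.edgeFinset.card))
    = (∑ A ∈ G.edgeFinset.powerset, ∏ v : V, ss m ((A.filter fun e => v ∈ e).card))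
        * ((2:ℚ)^(2*m))^(Fintype.card V) := by
  classical
  rw [Finset.sum_mul]
  refine Finset.sum_nbij' (fun B => B.image Subtype.val)
    (fun A => Finset.univ.filter (fun e => (e : Sym2 V) ∈ A)) ?_ ?_ ?_ ?_ ?_
  · intro B _
    rw [Finset.mem_powerset]
    intro x hx
    obtain ⟨e, _, rfl⟩ := Finset.mem_image.mp hx
    exact e.2
  · intro A _
    exact Finset.mem_powerset.mpr (Finset.subset_univ _)
  · intro B _
    ext e
    simp only [Finset.mem_filter, Finset.mem_univ, true_and, Finset.mem_image]
    constructor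
    · rintro ⟨e', he', h⟩
      rwa [← Subtype.ext h]
    · intro h
      exact ⟨e, h, rfl⟩
  · intro A hA
    have hA' := Finset.mem_powerset.mp hA
    ext x
    simp only [Finset.mem_image, Finset.mem_filter, Finset.mem_univ, true_and]
    constructor
    · rintro ⟨e, he, rfl⟩
      exact he
    · intro hx
      exact ⟨⟨x, hA' hx⟩, hx, rfl⟩
  · -- value equality
    intro B _
    have kcard : ∀ v : V, (((B.image Subtype.val).filter (fun x => v ∈ x)).card)
        = (ED G v ∩ B).card := by
      intro v
      rw [inter_filter_eq]
      rw [Finset.filter_image]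
      exact Finset.card_image_of_injective _ Subtype.val_injective
    have hP : (∏ v : V, ss m (((B.image Subtype.val).filter (fun x => v ∈ x)).card))
        = ∏ v : V, ss m ((ED G v ∩ B).card) :=
      Finset.prod_congr rfl (fun v _ => by rw [kcard v])
    rw [hP]
    have hkle : ∀ v : V, (ED G v ∩ B).card ≤ 2*m := by
      intro v
      calc (ED G v ∩ B).card ≤ (ED G v).card := Finset.card_le_card Finset.inter_subset_left
        _ = 2*m := (card_ED G v).trans (hreg v)
    have hE := edge_count G m hreg
    by_cases hall : ∀ v : V, Even ((ED G v ∩ B).card)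
    · have hssmul : ∀ v : V, ss m ((ED G v ∩ B).card) * 2^(2*m)
          = (-1:ℚ)^((ED G v ∩ B).card / 2) * 2^m * gg m ((ED G v ∩ B).card) :=
        fun v => ss_mul m _ (hkle v)
      have hrhs : (∏ v : V, ss m ((ED G v ∩ B).card)) * ((2:ℚ)^(2*m))^(Fintype.card V)
          = ∏ v : V, ((-1:ℚ)^((ED G v ∩ B).card / 2) * 2^m * gg m ((ED G v ∩ B).card)) := by
        rw [← Finset.card_univ, ← Finset.prod_const, ← Finset.prod_mul_distrib]
        exact Finset.prod_congr rfl (fun v _ => hssmul v)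
      rw [hrhs, Finset.prod_mul_distrib, Finset.prod_mul_distrib,
        Finset.prod_pow_eq_pow_sum]
      have hsum : ∑ v : V, (ED G v ∩ B).card / 2 = B.card := by
        have h1 : ∑ v : V, 2 * ((ED G v ∩ B).card / 2) = ∑ v : V, (ED G v ∩ B).card := by
          refine Finset.sum_congr rfl (fun v _ => ?_)
          obtain ⟨t, ht⟩ := hall v
          omega
        rw [← Finset.mul_sum] at h1
        have h2 := handshake G B
        omega
      rw [hsum, Finset.prod_const, Finset.card_univ, ← pow_mul, ← hE]
      ring
    · push_neg at hall
      obtain ⟨v₀, hv₀⟩ := hall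
      have hz1 : (∏ v : V, gg m ((ED G v ∩ B).card)) = 0 :=
        Finset.prod_eq_zero (Finset.mem_univ v₀) (godd m _ (hkle v₀) hv₀)
      have hz2 : (∏ v : V, ss m ((ED G v ∩ B).card)) = 0 :=
        Finset.prod_eq_zero (Finset.mem_univ v₀) (by rw [ss, if_neg hv₀])
      rw [hz1, hz2]
      ring

end BCaux

/-- Borbényi–Csikvári: for a `d`-regular graph (`d` even), the number of Eulerian
orientations equals `∑_{A ⊆ E} ∏_v s_{d_A(v)}`, where
`s_k = C(d,d/2) C(d/2,k/2) / (2^{d/2} C(d,k))` for even `k` and `s_k = 0` for odd `k`. -/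
theorem card_eulerian_orientations_regular
    {V : Type*} [Fintype V] [DecidableEq V] (G : SimpleGraph V) [DecidableRel G.Adj]
    (d : ℕ) (hd : Even d) (hd0 : 0 < d) (hreg : ∀ v : V, G.degree v = d) :
    (Nat.card {f : G.edgeFinset → V //
        (∀ e : G.edgeFinset, (f e : V) ∈ (e : Sym2 V)) ∧
        ∀ v : V, (Finset.univ.filter fun e => f e = v).card = d / 2} : ℚ) =
    ∑ A ∈ G.edgeFinset.powerset, ∏ v : V,
      (if Even ((A.filter fun e => v ∈ e).card) then
        ((d.choose (d / 2) : ℚ) * ((d / 2).choose ((A.filter fun e => v ∈ e).card / 2) : ℚ)) /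
          (2 ^ (d / 2) * (d.choose ((A.filter fun e => v ∈ e).card) : ℚ))
      else 0) := by
  classical
  obtain ⟨m, hm⟩ := hd
  have hd2 : d = 2 * m := by omega
  subst hd2
  have hdm : 2 * m / 2 = m := by omega
  simp only [hdm]
  have hRHS : ∀ A ∈ G.edgeFinset.powerset,
      (∏ v : V, (if Even ((A.filter fun e => v ∈ e).card) then
        (((2*m).choose m : ℚ) * ((m.choose ((A.filter fun e => v ∈ e).card / 2)) : ℚ)) /
          (2 ^ m * (((2*m).choose ((A.filter fun e => v ∈ e).card)) : ℚ))
      else 0))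
      = ∏ v : V, BCaux.ss m ((A.filter fun e => v ∈ e).card) := by
    intro A _
    exact Finset.prod_congr rfl (fun v _ => by rw [BCaux.ss])
  rw [Finset.sum_congr rfl hRHS]
  have hL : (Nat.card {f : G.edgeFinset → V //
        (∀ e : G.edgeFinset, (f e : V) ∈ (e : Sym2 V)) ∧
        ∀ v : V, (Finset.univ.filter fun e => f e = v).card = m} : ℚ)
      = ∑ f ∈ Fintype.piFinset (fun e => BCaux.ends G e), ∏ v : V,
          (if (Finset.univ.filter fun e => f e = v).card = m then (1:ℚ) else 0) := by
    rw [Nat.card_eq_fintype_card, Fintype.card_subtype]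
    have hset : (Finset.univ.filter (fun f : G.edgeFinset → V =>
        (∀ e : G.edgeFinset, f e ∈ (e : Sym2 V)) ∧
          ∀ v : V, (Finset.univ.filter fun e => f e = v).card = m))
        = (Fintype.piFinset (fun e => BCaux.ends G e)).filter
            (fun f => ∀ v : V, (Finset.univ.filter fun e => f e = v).card = m) := by
      ext f
      simp only [Finset.mem_filter, Finset.mem_univ, true_and, Fintype.mem_piFinset,
        BCaux.mem_ends]
    rw [hset, Finset.natCast_card_filter]
    refine Finset.sum_congr rfl (fun f _ => ?_)
    rw [Fintype.prod_boole]
  rw [hL]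
  have h3 := (BCaux.aux_expand G m hreg).trans (BCaux.aux_match G m hreg)
  have hne : ((2:ℚ)^(2*m))^(Fintype.card V) ≠ 0 := by positivity
  exact mul_right_cancel₀ hne h3
end
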